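/- arXiv:2511.12450 — 2 statements merged into one kernel-verified Lean document; each statement's English description precedes it below -/
import Mathlib

section
/- Let k, k′ > 0 and λ ∈ ℝ. Let r = (x, y), r′ = (x′, y′) and r_c′ = (x_c′, y_c′) be points of ℝ² with |r − r_c′| > |r′ − r_c′|, y > y′ and y > y_c′, and let (ρ_c′, θ_c′) be the polar coordinates of r′ − r_c′. Then the series Σ_{n∈ℤ} (−1)^n·J_n(k′ρ_c′)·e^{inθ_c′}·ω(λ,k′)^n·𝓔^{kk′}(x − x_c′, y, y_c′) converges absolutely and its sum equals 𝓔^{kk′}(x − x′, y, y′). -/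
open Complex MeasureTheory Filter

/-- The branch of the vertical wavenumber: κ(λ,k) = √(k²−λ²) if |λ| ≤ k,
and κ(λ,k) = i√(λ²−k²) if |λ| > k. -/
noncomputable def kappa (lam k : ℝ) : ℂ :=
  if |lam| ≤ k then ((Real.sqrt (k ^ 2 - lam ^ 2) : ℝ) : ℂ)
  else Complex.I * ((Real.sqrt (lam ^ 2 - k ^ 2) : ℝ) : ℂ)

/-- ω(λ,k) = (κ(λ,k) + iλ)/k. -/
noncomputable def omega (lam k : ℝ) : ℂ := (kappa lam k + Complex.I * (lam : ℂ)) / (k : ℂ)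

/-- The plane-wave kernel 𝓔^{kk′}(x, y, y′) = exp(iλx + iκ(λ,k)y − iκ(λ,k′)y′). -/
noncomputable def pwKernel (k k' lam x y y' : ℝ) : ℂ :=
  Complex.exp (Complex.I * (lam : ℂ) * (x : ℂ) + Complex.I * kappa lam k * (y : ℂ)
    - Complex.I * kappa lam k' * (y' : ℂ))

/-- Bessel function of the first kind of nonnegative integer order, via its power series. -/
noncomputable def besselJnat (n : ℕ) (z : ℂ) : ℂ :=
  ∑' m : ℕ, ((-1 : ℂ) ^ m / ((m.factorial : ℂ) * ((m + n).factorial : ℂ))) * (z / 2) ^ (2 * m + n)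

/-- Bessel function of the first kind of integer order, with J_{−n} = (−1)^n J_n. -/
noncomputable def besselJ (n : ℤ) (z : ℂ) : ℂ :=
  if 0 ≤ n then besselJnat n.toNat z else (-1 : ℂ) ^ ((-n).toNat) * besselJnat ((-n).toNat) z

/-- Auxiliary double-series term for the Jacobi–Anger expansion. -/
noncomputable def jaF (z t : ℂ) (pq : ℕ × ℕ) : ℂ :=
  (z * t / 2) ^ pq.1 / pq.1.factorial * ((-z / (2 * t)) ^ pq.2 / pq.2.factorial)

/-- Reindexing bijection `ℤ × ℕ ≃ ℕ × ℕ`, `(n, m) ↦ (m + n⁺, m + n⁻)`. -/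
def jaE : ℤ × ℕ ≃ ℕ × ℕ where
  toFun nm := (nm.2 + nm.1.toNat, nm.2 + (-nm.1).toNat)
  invFun pq := ((pq.1 : ℤ) - pq.2, min pq.1 pq.2)
  left_inv := by
    rintro ⟨n, m⟩
    simp only [Prod.mk.injEq]
    constructor
    · push_cast; omega
    · omega
  right_inv := by
    rintro ⟨p, q⟩
    simp only [Prod.mk.injEq]
    constructor <;> omega

lemma expnorm_summable (w : ℂ) : Summable fun p : ℕ => ‖w ^ p / p.factorial‖ := by
  have h : ∀ p : ℕ, ‖w ^ p / (p.factorial : ℂ)‖ = ‖w‖ ^ p / p.factorial := by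
    intro p
    rw [norm_div, norm_pow, Complex.norm_natCast]
  simp only [h]
  exact Real.summable_pow_div_factorial ‖w‖

lemma jaF_summable_norm (z t : ℂ) : Summable fun pq : ℕ × ℕ => ‖jaF z t pq‖ := by
  show Summable fun pq : ℕ × ℕ =>
    ‖(z * t / 2) ^ pq.1 / pq.1.factorial * ((-z / (2 * t)) ^ pq.2 / pq.2.factorial)‖
  exact Summable.mul_norm (f := fun p : ℕ => (z * t / 2) ^ p / p.factorial)
    (g := fun q : ℕ => (-z / (2 * t)) ^ q / q.factorial)
    (expnorm_summable _) (expnorm_summable _)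

lemma exp_tsum' (w : ℂ) : Complex.exp w = ∑' p : ℕ, w ^ p / p.factorial := by
  rw [Complex.exp_eq_exp_ℂ, NormedSpace.exp_eq_tsum_div]

lemma jaF_tsum (z t : ℂ) :
    ∑' pq : ℕ × ℕ, jaF z t pq = Complex.exp (z * t / 2) * Complex.exp (-z / (2 * t)) := by
  rw [exp_tsum', exp_tsum',
    tsum_mul_tsum_of_summable_norm (expnorm_summable (z * t / 2))
      (expnorm_summable (-z / (2 * t)))]
  rfl

lemma jaF_fiber (z t : ℂ) (ht : t ≠ 0) (n : ℤ) :
    ∑' m : ℕ, jaF z t (jaE (n, m)) = besselJ n z * t ^ n := by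
  rcases le_or_gt 0 n with hn | hn
  · have hb : (-n).toNat = 0 := by omega
    have key : ∀ m : ℕ, jaF z t (jaE (n, m))
        = ((-1 : ℂ) ^ m / ((m.factorial : ℂ) * ((m + n.toNat).factorial : ℂ)))
            * (z / 2) ^ (2 * m + n.toNat) * t ^ n.toNat := by
      intro m
      have hE : jaE (n, m) = (m + n.toNat, m + (-n).toNat) := rfl
      rw [hE, hb, add_zero]
      simp only [jaF]
      have hfac1 : ((m.factorial : ℕ) : ℂ) ≠ 0 := Nat.cast_ne_zero.2 m.factorial_ne_zero
      have hfac2 : (((m + n.toNat).factorial : ℕ) : ℂ) ≠ 0 :=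
        Nat.cast_ne_zero.2 (m + n.toNat).factorial_ne_zero
      rw [neg_div, neg_pow]
      field_simp
      have htm : t ^ m * t⁻¹ ^ m = 1 := by rw [← mul_pow, mul_inv_cancel₀ ht, one_pow]
      linear_combination (z ^ (m * 2) * z ^ n.toNat * t ^ n.toNat * (1 / 2 : ℂ) ^ (m * 2)
        * (1 / 2 : ℂ) ^ n.toNat) * htm
    rw [tsum_congr key, tsum_mul_right]
    have htn : t ^ n = t ^ n.toNat := by
      rw [← zpow_natCast t n.toNat, Int.toNat_of_nonneg hn]
    rw [htn]
    simp only [besselJ, if_pos hn, besselJnat]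
  · have ha : n.toNat = 0 := by omega
    have key : ∀ m : ℕ, jaF z t (jaE (n, m))
        = ((-1 : ℂ) ^ m / ((m.factorial : ℂ) * ((m + (-n).toNat).factorial : ℂ)))
            * (z / 2) ^ (2 * m + (-n).toNat)
            * ((-1 : ℂ) ^ (-n).toNat * (t⁻¹) ^ (-n).toNat) := by
      intro m
      have hE : jaE (n, m) = (m + n.toNat, m + (-n).toNat) := rfl
      rw [hE, ha, add_zero]
      simp only [jaF]
      have hfac1 : ((m.factorial : ℕ) : ℂ) ≠ 0 := Nat.cast_ne_zero.2 m.factorial_ne_zero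
      have hfac2 : (((m + (-n).toNat).factorial : ℕ) : ℂ) ≠ 0 :=
        Nat.cast_ne_zero.2 (m + (-n).toNat).factorial_ne_zero
      rw [neg_div, neg_pow]
      field_simp
      have htm : t ^ m * t⁻¹ ^ m = 1 := by rw [← mul_pow, mul_inv_cancel₀ ht, one_pow]
      linear_combination (z ^ (m * 2) * z ^ (-n).toNat * t⁻¹ ^ (-n).toNat * (-1 : ℂ) ^ m
        * (-1 : ℂ) ^ (-n).toNat * (1 / 2 : ℂ) ^ (m * 2) * (1 / 2 : ℂ) ^ (-n).toNat) * htm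
    rw [tsum_congr key, tsum_mul_right]
    have htn : t ^ n = (t⁻¹) ^ (-n).toNat := by
      have hcast : (((-n).toNat : ℕ) : ℤ) = -n := Int.toNat_of_nonneg (by omega)
      rw [inv_pow, ← zpow_natCast t, hcast, zpow_neg, inv_inv]
    rw [htn]
    simp only [besselJ, if_neg (not_le.2 hn), besselJnat]
    ring

lemma jacobiAnger (z t : ℂ) (ht : t ≠ 0) :
    (Summable fun n : ℤ => ∑' m : ℕ, ‖jaF z t (jaE (n, m))‖) ∧
    (∀ n : ℤ, ‖besselJ n z * t ^ n‖ ≤ ∑' m : ℕ, ‖jaF z t (jaE (n, m))‖) ∧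
    ∑' n : ℤ, besselJ n z * t ^ n = Complex.exp (z / 2 * (t - t⁻¹)) := by
  have hFn : Summable fun nm : ℤ × ℕ => ‖jaF z t (jaE nm)‖ :=
    (Equiv.summable_iff jaE).2 (jaF_summable_norm z t)
  have hslice : ∀ n : ℤ, Summable fun m : ℕ => ‖jaF z t (jaE (n, m))‖ := fun n =>
    hFn.prod_factor n
  have hg : Summable fun n : ℤ => ∑' m : ℕ, ‖jaF z t (jaE (n, m))‖ :=
    (hFn.hasSum.prod_fiberwise fun n => (hslice n).hasSum).summable
  refine ⟨hg, ?_, ?_⟩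
  · intro n
    rw [← jaF_fiber z t ht n]
    exact norm_tsum_le_tsum_norm (hslice n)
  · have hF : Summable fun nm : ℤ × ℕ => jaF z t (jaE nm) := hFn.of_norm
    calc ∑' n : ℤ, besselJ n z * t ^ n
        = ∑' (n : ℤ) (m : ℕ), jaF z t (jaE (n, m)) :=
          tsum_congr fun n => (jaF_fiber z t ht n).symm
      _ = ∑' nm : ℤ × ℕ, jaF z t (jaE nm) := hF.tsum_prod.symm
      _ = ∑' pq : ℕ × ℕ, jaF z t pq := jaE.tsum_eq _
      _ = Complex.exp (z * t / 2) * Complex.exp (-z / (2 * t)) := jaF_tsum z t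
      _ = Complex.exp (z / 2 * (t - t⁻¹)) := by
          rw [← Complex.exp_add]
          congr 1
          field_simp
          ring

/-- local-type expansion of the plane-wave kernel. For
|r − r_c′| > |r′ − r_c′|, y > y′, y > y_c′, with (ρ_c′, θ_c′) the polar coordinates of
r′ − r_c′, the series Σ_{n∈ℤ} (−1)^n J_n(k′ρ_c′) e^{inθ_c′} ω(λ,k′)^n 𝓔^{kk′}(x − x_c′, y, y_c′)
converges absolutely with sum 𝓔^{kk′}(x − x′, y, y′). -/
theorem pwKernel_local_expansion
    (k k' lam : ℝ) (hk : 0 < k) (hk' : 0 < k')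
    (x y x' y' xc' yc' ρc' θc' : ℝ)
    (hρc' : 0 ≤ ρc')
    (hxc' : x' - xc' = ρc' * Real.cos θc') (hyc' : y' - yc' = ρc' * Real.sin θc')
    (hsep : Real.sqrt ((x - xc') ^ 2 + (y - yc') ^ 2)
      > Real.sqrt ((x' - xc') ^ 2 + (y' - yc') ^ 2))
    (hyy' : y > y') (hyyc' : y > yc') :
    Summable (fun n : ℤ =>
      ‖(-1 : ℂ) ^ n * besselJ n ((k' * ρc' : ℝ) : ℂ)
        * Complex.exp (Complex.I * (n : ℂ) * (θc' : ℂ))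
        * (omega lam k') ^ n * pwKernel k k' lam (x - xc') y yc'‖) ∧
    (∑' n : ℤ, (-1 : ℂ) ^ n * besselJ n ((k' * ρc' : ℝ) : ℂ)
        * Complex.exp (Complex.I * (n : ℂ) * (θc' : ℂ))
        * (omega lam k') ^ n * pwKernel k k' lam (x - xc') y yc')
      = pwKernel k k' lam (x - x') y y' := by
  have hk'c : (k' : ℂ) ≠ 0 := by exact_mod_cast hk'.ne'
  set z : ℂ := ((k' * ρc' : ℝ) : ℂ) with hz_def
  set t : ℂ := -(omega lam k') * Complex.exp (Complex.I * (θc' : ℂ)) with ht_def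
  -- κ² = k′² − λ²
  have hkappa_sq : kappa lam k' ^ 2 = (k' : ℂ) ^ 2 - (lam : ℂ) ^ 2 := by
    rw [kappa]
    split_ifs with h
    · have h2 : (0 : ℝ) ≤ k' ^ 2 - lam ^ 2 := by nlinarith [_root_.sq_abs lam, abs_nonneg lam]
      rw [← Complex.ofReal_pow, Real.sq_sqrt h2]
      push_cast; ring
    · push_neg at h
      have h2 : (0 : ℝ) ≤ lam ^ 2 - k' ^ 2 := by nlinarith [_root_.sq_abs lam, hk'.le, abs_nonneg lam]
      rw [mul_pow, Complex.I_sq, ← Complex.ofReal_pow, Real.sq_sqrt h2]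
      push_cast; ring
  have hprod : (kappa lam k' + Complex.I * lam) * (kappa lam k' - Complex.I * lam)
      = (k' : ℂ) ^ 2 := by
    linear_combination hkappa_sq - (lam : ℂ) ^ 2 * Complex.I_sq
  have homega : omega lam k' * ((kappa lam k' - Complex.I * lam) / k') = 1 := by
    rw [omega, div_mul_div_comm, hprod, show (k' : ℂ) * k' = (k' : ℂ) ^ 2 by ring,
      div_self (pow_ne_zero 2 hk'c)]
  have hω0 : omega lam k' ≠ 0 := left_ne_zero_of_mul_eq_one homega
  have ht0 : t ≠ 0 := by
    rw [ht_def]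
    exact mul_ne_zero (neg_ne_zero.2 hω0) (Complex.exp_ne_zero _)
  obtain ⟨hg, hbound, hsum⟩ := jacobiAnger z t ht0
  -- per-term rewriting
  have hterm : ∀ n : ℤ, (-1 : ℂ) ^ n * besselJ n z
      * Complex.exp (Complex.I * (n : ℂ) * (θc' : ℂ)) * (omega lam k') ^ n
      = besselJ n z * t ^ n := by
    intro n
    have he : Complex.exp (Complex.I * (n : ℂ) * (θc' : ℂ))
        = Complex.exp (Complex.I * (θc' : ℂ)) ^ n := by
      rw [show Complex.I * (n : ℂ) * (θc' : ℂ) = (n : ℂ) * (Complex.I * (θc' : ℂ)) by ring,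
        Complex.exp_int_mul]
    have hbase : (-1 : ℂ) * Complex.exp (Complex.I * (θc' : ℂ)) * omega lam k' = t := by
      rw [ht_def]; ring
    rw [he, ← hbase, mul_zpow, mul_zpow]
    ring
  constructor
  · refine Summable.of_nonneg_of_le (fun n => norm_nonneg _) (fun n => ?_)
      (hg.mul_right ‖pwKernel k k' lam (x - xc') y yc'‖)
    rw [norm_mul, hterm n]
    exact mul_le_mul_of_nonneg_right (hbound n) (norm_nonneg _)
  · -- the exponent computation
    have hxC : (x' : ℂ) - (xc' : ℂ) = (ρc' : ℂ) * Complex.cos (θc' : ℂ) := by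
      have h0 : ((x' - xc' : ℝ) : ℂ) = ((ρc' * Real.cos θc' : ℝ) : ℂ) := by
        exact_mod_cast congrArg Complex.ofReal hxc'
      push_cast at h0
      exact h0
    have hyC : (y' : ℂ) - (yc' : ℂ) = (ρc' : ℂ) * Complex.sin (θc' : ℂ) := by
      have h0 : ((y' - yc' : ℝ) : ℂ) = ((ρc' * Real.sin θc' : ℝ) : ℂ) := by
        exact_mod_cast congrArg Complex.ofReal hyc'
      push_cast at h0
      exact h0
    have hexpI : Complex.exp (Complex.I * (θc' : ℂ))
        = Complex.cos (θc' : ℂ) + Complex.sin (θc' : ℂ) * Complex.I := by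
      rw [mul_comm, Complex.exp_mul_I]
    have hexpI' : Complex.exp (-(Complex.I * (θc' : ℂ)))
        = Complex.cos (θc' : ℂ) - Complex.sin (θc' : ℂ) * Complex.I := by
      rw [show -(Complex.I * (θc' : ℂ)) = ((-θc' : ℝ) : ℂ) * Complex.I by push_cast; ring,
        Complex.exp_mul_I]
      push_cast
      rw [Complex.cos_neg, Complex.sin_neg]
      ring
    have htinv : t⁻¹ = -((kappa lam k' - Complex.I * lam) / k')
        * Complex.exp (-(Complex.I * (θc' : ℂ))) := by
      refine inv_eq_of_mul_eq_one_right ?_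
      calc t * (-((kappa lam k' - Complex.I * lam) / k')
              * Complex.exp (-(Complex.I * (θc' : ℂ))))
          = (omega lam k' * ((kappa lam k' - Complex.I * lam) / k'))
              * (Complex.exp (Complex.I * (θc' : ℂ))
                * Complex.exp (-(Complex.I * (θc' : ℂ)))) := by rw [ht_def]; ring
        _ = 1 := by
            rw [homega, ← Complex.exp_add, add_neg_cancel, Complex.exp_zero, one_mul]
    have hS : z / 2 * (t - t⁻¹)
        = -(Complex.I * lam * ((x' : ℂ) - xc')) - Complex.I * kappa lam k'
            * ((y' : ℂ) - yc') := by
      rw [htinv, ht_def, hz_def, hxC, hyC, hexpI, hexpI', omega]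
      push_cast
      field_simp
      ring
    calc ∑' n : ℤ, (-1 : ℂ) ^ n * besselJ n z
          * Complex.exp (Complex.I * (n : ℂ) * (θc' : ℂ))
          * (omega lam k') ^ n * pwKernel k k' lam (x - xc') y yc'
        = ∑' n : ℤ, besselJ n z * t ^ n * pwKernel k k' lam (x - xc') y yc' :=
          tsum_congr fun n => by rw [hterm n]
      _ = (∑' n : ℤ, besselJ n z * t ^ n) * pwKernel k k' lam (x - xc') y yc' :=
          tsum_mul_right
      _ = Complex.exp (z / 2 * (t - t⁻¹)) * pwKernel k k' lam (x - xc') y yc' := by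
          rw [hsum]
      _ = pwKernel k k' lam (x - x') y y' := by
          rw [pwKernel, pwKernel, ← Complex.exp_add]
          congr 1
          rw [hS]
          push_cast
          ring
end

section
/- Let k > 0, λ ∈ ℝ, ρ ≥ 0 and θ ∈ ℝ. Then the series Σ_{n∈ℤ} J_n(kρ)·e^{inθ}·ω(λ,k)^n converges absolutely and equals exp(iρ·(λ·cos θ + κ(λ,k)·sin θ)). (This extends the Jacobi–Anger expansion to the evanescent regime |λ| > k.) -/
open Complex MeasureTheory Filter

/-! ### Auxiliary machinery -/

noncomputable def Fct (z t : ℂ) : ℕ × ℕ → ℂ :=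
  fun pq => (z * t / 2) ^ pq.1 / pq.1.factorial * ((-(z * t⁻¹) / 2) ^ pq.2 / pq.2.factorial)

lemma summable_norm_exp_series (w : ℂ) :
    Summable (fun p : ℕ => ‖w ^ p / (p.factorial : ℂ)‖) := by
  simpa [norm_div, norm_pow, Complex.norm_natCast] using Real.summable_pow_div_factorial ‖w‖

lemma summable_norm_F (z t : ℂ) : Summable (fun pq => ‖Fct z t pq‖) := by
  have h := Summable.mul_of_nonneg (summable_norm_exp_series (z * t / 2))
    (summable_norm_exp_series (-(z * t⁻¹) / 2))
    (fun _ => norm_nonneg _) (fun _ => norm_nonneg _)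
  simp only [Fct, norm_mul]
  exact h

lemma hasSum_F (z t : ℂ) :
    HasSum (Fct z t) (Complex.exp (z * t / 2) * Complex.exp (-(z * t⁻¹) / 2)) := by
  have hs : Summable (Fct z t) := (summable_norm_F z t).of_norm
  have hmul := tsum_mul_tsum_of_summable_norm
    (summable_norm_exp_series (z * t / 2)) (summable_norm_exp_series (-(z * t⁻¹) / 2))
  have he1 : Complex.exp (z * t / 2) = ∑' p : ℕ, (z * t / 2) ^ p / (p.factorial : ℂ) := by
    rw [Complex.exp_eq_exp_ℂ, NormedSpace.exp_eq_tsum_div]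
  have he2 : Complex.exp (-(z * t⁻¹) / 2)
      = ∑' q : ℕ, (-(z * t⁻¹) / 2) ^ q / (q.factorial : ℂ) := by
    rw [Complex.exp_eq_exp_ℂ, NormedSpace.exp_eq_tsum_div]
  have : (∑' pq : ℕ × ℕ, Fct z t pq)
      = Complex.exp (z * t / 2) * Complex.exp (-(z * t⁻¹) / 2) := by
    rw [he1, he2, hmul]; rfl
  exact this ▸ hs.hasSum

noncomputable def fibEq (n : ℤ) : ℕ ≃ ((fun pq : ℕ × ℕ => (pq.1 : ℤ) - pq.2) ⁻¹' {n}) :=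
{ toFun := fun m => ⟨(m + n.toNat, m + (-n).toNat), by
    simp only [Set.mem_preimage, Set.mem_singleton_iff]; push_cast; omega⟩
  invFun := fun x => min x.1.1 x.1.2
  left_inv := fun m => by simp only; omega
  right_inv := fun x => by
    obtain ⟨⟨p, q⟩, hpq⟩ := x
    simp only [Set.mem_preimage, Set.mem_singleton_iff] at hpq
    apply Subtype.ext
    simp only
    apply Prod.ext <;> simp only <;> omega }

lemma Fct_term (z t : ℂ) (ht : t ≠ 0) (n : ℤ) (m p0 q0 : ℕ) (h : (p0 : ℤ) - q0 = n) :
    Fct z t (m + p0, m + q0)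
      = ((-1 : ℂ) ^ (m + q0) / (((m + p0).factorial : ℂ) * ((m + q0).factorial : ℂ)))
        * (z / 2) ^ (2 * m + p0 + q0) * t ^ n := by
  have htpow : t ^ (m + p0) * (t⁻¹) ^ (m + q0) = t ^ n := by
    rw [← zpow_natCast t (m + p0), ← zpow_natCast t⁻¹ (m + q0), inv_zpow, ← zpow_neg,
      ← zpow_add₀ ht]
    congr 1
    push_cast
    omega
  simp only [Fct]
  rw [← htpow]
  have h1 : z * t / 2 = z / 2 * t := by ring
  have h2 : -(z * t⁻¹) / 2 = -1 * (z / 2) * t⁻¹ := by ring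
  rw [h1, h2, mul_pow, mul_pow, mul_pow]
  ring

lemma fiber_sum (z t : ℂ) (ht : t ≠ 0) (n : ℤ) :
    (∑' y : ((fun pq : ℕ × ℕ => (pq.1 : ℤ) - pq.2) ⁻¹' {n}), Fct z t y)
      = besselJ n z * t ^ n := by
  rw [← (fibEq n).tsum_eq]
  have hpq : ((n.toNat : ℤ)) - ((-n).toNat : ℤ) = n := by omega
  by_cases hn : 0 ≤ n
  · have hq0 : (-n).toNat = 0 := by omega
    have hterm : ∀ m : ℕ, Fct z t (m + n.toNat, m + (-n).toNat)
        = ((-1 : ℂ) ^ m / ((m.factorial : ℂ) * ((m + n.toNat).factorial : ℂ)))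
          * (z / 2) ^ (2 * m + n.toNat) * t ^ n := by
      intro m
      rw [Fct_term z t ht n m n.toNat ((-n).toNat) hpq, hq0]
      simp only [Nat.add_zero]
      ring
    calc (∑' m : ℕ, Fct z t ((fibEq n) m))
        = ∑' m : ℕ, ((-1 : ℂ) ^ m / ((m.factorial : ℂ) * ((m + n.toNat).factorial : ℂ)))
            * (z / 2) ^ (2 * m + n.toNat) * t ^ n := by
          exact tsum_congr fun m => hterm m
      _ = besselJnat n.toNat z * t ^ n := by rw [tsum_mul_right]; rfl
      _ = besselJ n z * t ^ n := by rw [besselJ, if_pos hn]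
  · have hp0 : n.toNat = 0 := by omega
    have hterm : ∀ m : ℕ, Fct z t (m + n.toNat, m + (-n).toNat)
        = ((-1 : ℂ) ^ ((-n).toNat) * t ^ n)
          * (((-1 : ℂ) ^ m / ((m.factorial : ℂ) * ((m + (-n).toNat).factorial : ℂ)))
            * (z / 2) ^ (2 * m + (-n).toNat)) := by
      intro m
      rw [Fct_term z t ht n m n.toNat ((-n).toNat) hpq, hp0]
      simp only [Nat.add_zero, pow_add]
      ring
    calc (∑' m : ℕ, Fct z t ((fibEq n) m))
        = ∑' m : ℕ, ((-1 : ℂ) ^ ((-n).toNat) * t ^ n)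
            * (((-1 : ℂ) ^ m / ((m.factorial : ℂ) * ((m + (-n).toNat).factorial : ℂ)))
              * (z / 2) ^ (2 * m + (-n).toNat)) := tsum_congr fun m => hterm m
      _ = ((-1 : ℂ) ^ ((-n).toNat) * t ^ n) * besselJnat ((-n).toNat) z := by
          rw [tsum_mul_left]; rfl
      _ = besselJ n z * t ^ n := by rw [besselJ, if_neg hn]; ring

lemma jacobi_anger_gen (z t : ℂ) (ht : t ≠ 0) :
    Summable (fun n : ℤ => ‖besselJ n z * t ^ n‖) ∧
    (∑' n : ℤ, besselJ n z * t ^ n) = Complex.exp (z * t / 2 + -(z * t⁻¹) / 2) := by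
  have hnorm := summable_norm_F z t
  have hF := hasSum_F z t
  have hfib := hF.tsum_fiberwise (fun pq : ℕ × ℕ => (pq.1 : ℤ) - pq.2)
  have hfibn := (hnorm.hasSum).tsum_fiberwise (fun pq : ℕ × ℕ => (pq.1 : ℤ) - pq.2)
  have heq : ∀ n : ℤ, (∑' y : ((fun pq : ℕ × ℕ => (pq.1 : ℤ) - pq.2) ⁻¹' {n}), Fct z t y)
      = besselJ n z * t ^ n := fiber_sum z t ht
  constructor
  · refine hfibn.summable.of_nonneg_of_le (fun n => norm_nonneg _) (fun n => ?_)
    rw [← heq n]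
    exact norm_tsum_le_tsum_norm (hnorm.subtype _)
  · have h2 : HasSum (fun n : ℤ => besselJ n z * t ^ n)
        (Complex.exp (z * t / 2) * Complex.exp (-(z * t⁻¹) / 2)) := by
      have := hfib
      simp only [heq] at this
      exact this
    rw [h2.tsum_eq, ← Complex.exp_add]

lemma kappa_sq (lam k : ℝ) (hk : 0 < k) : (kappa lam k) ^ 2 = (k : ℂ) ^ 2 - (lam : ℂ) ^ 2 := by
  rw [kappa]
  split_ifs with h
  · have h2 : lam ^ 2 ≤ k ^ 2 := by
      rw [← _root_.sq_abs lam]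
      exact pow_le_pow_left₀ (abs_nonneg lam) h 2
    rw [← Complex.ofReal_pow, Real.sq_sqrt (by linarith)]
    push_cast
    ring
  · push_neg at h
    have h2 : k ^ 2 ≤ lam ^ 2 := by
      rw [← _root_.sq_abs lam]
      exact pow_le_pow_left₀ hk.le h.le 2
    rw [mul_pow, Complex.I_sq, ← Complex.ofReal_pow, Real.sq_sqrt (by linarith)]
    push_cast
    ring

lemma kappa_mul (lam k : ℝ) (hk : 0 < k) :
    (kappa lam k + Complex.I * lam) * (kappa lam k - Complex.I * lam) = (k : ℂ) ^ 2 := by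
  linear_combination kappa_sq lam k hk - (lam : ℂ) ^ 2 * Complex.I_sq

lemma omega_ne_zero (lam k : ℝ) (hk : 0 < k) : omega lam k ≠ 0 := by
  have hks : (k : ℂ) ≠ 0 := Complex.ofReal_ne_zero.mpr (ne_of_gt hk)
  have hmul := kappa_mul lam k hk
  rw [omega, div_ne_zero_iff]
  refine ⟨fun h0 => ?_, hks⟩
  rw [h0, zero_mul] at hmul
  exact pow_ne_zero 2 hks hmul.symm

/-- extended Jacobi–Anger expansion. For k > 0, λ ∈ ℝ, ρ ≥ 0 and θ ∈ ℝ,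
the series Σ_{n∈ℤ} J_n(kρ) e^{inθ} ω(λ,k)^n converges absolutely and equals
exp(iρ(λ cos θ + κ(λ,k) sin θ)). -/
theorem jacobi_anger_evanescent (k lam ρ θ : ℝ) (hk : 0 < k) (hρ : 0 ≤ ρ) :
    Summable (fun n : ℤ =>
      ‖besselJ n ((k * ρ : ℝ) : ℂ) * Complex.exp (Complex.I * (n : ℂ) * (θ : ℂ))
        * (omega lam k) ^ n‖) ∧
    (∑' n : ℤ, besselJ n ((k * ρ : ℝ) : ℂ) * Complex.exp (Complex.I * (n : ℂ) * (θ : ℂ))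
        * (omega lam k) ^ n)
      = Complex.exp (Complex.I * (ρ : ℂ)
          * ((lam : ℂ) * (Real.cos θ : ℂ) + kappa lam k * (Real.sin θ : ℂ))) := by
  have hks : (k : ℂ) ≠ 0 := Complex.ofReal_ne_zero.mpr (ne_of_gt hk)
  have hE0 : Complex.exp (Complex.I * (θ : ℂ)) ≠ 0 := Complex.exp_ne_zero _
  have ht : Complex.exp (Complex.I * (θ : ℂ)) * omega lam k ≠ 0 :=
    mul_ne_zero hE0 (omega_ne_zero lam k hk)
  obtain ⟨hsum, heq⟩ := jacobi_anger_gen ((k * ρ : ℝ) : ℂ)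
    (Complex.exp (Complex.I * (θ : ℂ)) * omega lam k) ht
  have hterm : ∀ n : ℤ,
      besselJ n ((k * ρ : ℝ) : ℂ) * Complex.exp (Complex.I * (n : ℂ) * (θ : ℂ))
        * (omega lam k) ^ n
      = besselJ n ((k * ρ : ℝ) : ℂ)
        * (Complex.exp (Complex.I * (θ : ℂ)) * omega lam k) ^ n := by
    intro n
    have hx : Complex.exp (Complex.I * (n : ℂ) * (θ : ℂ))
        = Complex.exp (Complex.I * (θ : ℂ)) ^ n := by
      rw [show Complex.I * (n : ℂ) * (θ : ℂ) = (n : ℂ) * (Complex.I * (θ : ℂ)) by ring,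
        Complex.exp_int_mul]
    rw [hx, mul_zpow, mul_assoc]
  have hE : Complex.exp (Complex.I * (θ : ℂ))
      = (Real.cos θ : ℂ) + (Real.sin θ : ℂ) * Complex.I := by
    rw [show Complex.I * (θ : ℂ) = (θ : ℂ) * Complex.I by ring, Complex.exp_mul_I,
      ← Complex.ofReal_cos, ← Complex.ofReal_sin]
  have hEinv : (Complex.exp (Complex.I * (θ : ℂ)))⁻¹
      = (Real.cos θ : ℂ) - (Real.sin θ : ℂ) * Complex.I := by
    rw [← Complex.exp_neg, show -(Complex.I * (θ : ℂ)) = ((-θ : ℝ) : ℂ) * Complex.I by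
        push_cast; ring, Complex.exp_mul_I, ← Complex.ofReal_cos, ← Complex.ofReal_sin,
      Real.cos_neg, Real.sin_neg]
    push_cast
    ring
  have hωinv : (omega lam k)⁻¹ = (kappa lam k - Complex.I * (lam : ℂ)) / (k : ℂ) := by
    refine inv_eq_of_mul_eq_one_right ?_
    rw [omega, div_mul_div_comm, kappa_mul lam k hk]
    rw [sq]
    field_simp
  have hexp : ((k * ρ : ℝ) : ℂ) * (Complex.exp (Complex.I * (θ : ℂ)) * omega lam k) / 2
      + -(((k * ρ : ℝ) : ℂ) * (Complex.exp (Complex.I * (θ : ℂ)) * omega lam k)⁻¹) / 2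
      = Complex.I * (ρ : ℂ)
        * ((lam : ℂ) * (Real.cos θ : ℂ) + kappa lam k * (Real.sin θ : ℂ)) := by
    rw [mul_inv, hEinv, hωinv, hE, omega]
    push_cast
    field_simp
    ring
  constructor
  · simpa only [hterm] using hsum
  · rw [tsum_congr hterm, heq, hexp]
end
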